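/- S is a p'-valenced scheme if and only if there exists a two-sided ideal D of the Terwilliger algebra T such that T = B_0 ⊕ D (internal direct sum of two-sided ideals), where B_0 = span_F{E_i^* J E_j^* : i,j ∈ [0,d]}. -/
import Mathlib


open Matrix

/-- An association scheme of class `d` on a finite set `X`: every pair is assigned a
relation index `r x y ∈ [0,d]`, relation `0` is the diagonal, there is a transpose
involution `inv`, each relation is attained, and the intersection numbers
`p i j ℓ = |{z : (x,z) ∈ R_i, (z,y) ∈ R_j}|` depend only on `ℓ = r x y`. -/
structure AssocScheme (X : Type*) [Fintype X] [DecidableEq X] (d : ℕ) where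
  r : X → X → Fin (d + 1)
  r_diag : ∀ x y : X, r x y = 0 ↔ x = y
  inv : Fin (d + 1) → Fin (d + 1)
  r_symm : ∀ x y : X, r y x = inv (r x y)
  p : Fin (d + 1) → Fin (d + 1) → Fin (d + 1) → ℕ
  card_p : ∀ (i j : Fin (d + 1)) (x y : X),
    (Finset.univ.filter fun z : X => r x z = i ∧ r z y = j).card = p i j (r x y)
  surj : ∀ i : Fin (d + 1), ∃ x y : X, r x y = i

namespace AssocScheme

variable {X : Type*} [Fintype X] [DecidableEq X] {d : ℕ}

/-- The valency `k_i = p_{i i'}^0` of the relation `R_i`. -/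
def k (S : AssocScheme X d) (i : Fin (d + 1)) : ℕ := S.p i (S.inv i) 0

variable (F : Type*) [Field F]

/-- The adjacency matrix of the relation `R_j` over `F`. -/
def adjM (S : AssocScheme X d) (j : Fin (d + 1)) : Matrix X X F :=
  Matrix.of fun y z => if S.r y z = j then 1 else 0

/-- The dual idempotent `E_i^*` with respect to the base point `x`. -/
def dualIdem (S : AssocScheme X d) (x : X) (i : Fin (d + 1)) : Matrix X X F :=
  Matrix.of fun y z => if y = z ∧ S.r x y = i then 1 else 0

/-- The all-one matrix `J`. -/
def Jmat : Matrix X X F := Matrix.of fun _ _ => 1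

/-- The (modular) Terwilliger algebra of `S` with respect to `x`. -/
def terw (S : AssocScheme X d) (x : X) : Subalgebra F (Matrix X X F) :=
  Algebra.adjoin F (Set.range (S.adjM F) ∪ Set.range (S.dualIdem F x))

/-- The primary module `W_0 = span_F {E_i^* 𝟏 : i ∈ [0,d]}`. -/
def W0 (S : AssocScheme X d) (x : X) : Submodule F (X → F) :=
  Submodule.span F (Set.range fun i : Fin (d + 1) => S.dualIdem F x i *ᵥ (1 : X → F))

/-- `B_0 = span_F {E_i^* J E_j^* : i,j ∈ [0,d]}`. -/
def B0 (S : AssocScheme X d) (x : X) : Submodule F (Matrix X X F) :=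
  Submodule.span F (Set.range fun q : Fin (d + 1) × Fin (d + 1) =>
    S.dualIdem F x q.1 * Jmat F * S.dualIdem F x q.2)

/-- `B_1 = span_F {E_i^* J E_j^* : p ∣ k_i k_j}`. -/
def B1 (p : ℕ) (S : AssocScheme X d) (x : X) : Submodule F (Matrix X X F) :=
  Submodule.span F {Z : Matrix X X F | ∃ i j : Fin (d + 1),
    p ∣ S.k i * S.k j ∧ Z = S.dualIdem F x i * Jmat F * S.dualIdem F x j}

section Aux

variable (S : AssocScheme X d) (x : X)

lemma inv_inv (m : Fin (d + 1)) : S.inv (S.inv m) = m := by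
  obtain ⟨a, b, hab⟩ := S.surj m
  have h1 := S.r_symm a b
  have h2 := S.r_symm b a
  rw [hab] at h1
  rw [h1, hab] at h2
  exact h2.symm

lemma r_eq_iff (y w : X) (m : Fin (d + 1)) : S.r y w = m ↔ S.r w y = S.inv m := by
  constructor
  · intro h; rw [S.r_symm y w, h]
  · intro h; rw [S.r_symm w y, h, S.inv_inv]

lemma card_r (y : X) (i : Fin (d + 1)) :
    (Finset.univ.filter fun z : X => S.r y z = i).card = S.k i := by
  have h := S.card_p i (S.inv i) y y
  rw [(S.r_diag y y).mpr rfl] at h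
  rw [k, ← h]
  congr 1
  ext z
  simp only [Finset.mem_filter, Finset.mem_univ, true_and]
  constructor
  · intro hz; exact ⟨hz, (S.r_eq_iff y z i).mp hz⟩
  · intro hz; exact hz.1

lemma k_pos (i : Fin (d + 1)) : 0 < S.k i := by
  obtain ⟨a, b, hab⟩ := S.surj i
  rw [← S.card_r a i]
  exact Finset.card_pos.mpr ⟨b, by simp [hab]⟩

lemma exists_r (i : Fin (d + 1)) : ∃ y : X, S.r x y = i := by
  have := S.k_pos i
  rw [← S.card_r x i] at this
  obtain ⟨y, hy⟩ := Finset.card_pos.mp this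
  exact ⟨y, (Finset.mem_filter.mp hy).2⟩

lemma ind_mul {a b : Prop} [Decidable a] [Decidable b] :
    (if a then (1 : F) else 0) * (if b then 1 else 0) = if a ∧ b then 1 else 0 := by
  by_cases ha : a <;> by_cases hb : b <;> simp [ha, hb]

lemma EJE_apply (i j : Fin (d + 1)) (y z : X) :
    (S.dualIdem F x i * Jmat F * S.dualIdem F x j : Matrix X X F) y z
      = if S.r x y = i ∧ S.r x z = j then 1 else 0 := by
  have hEJ : ∀ w : X, (S.dualIdem F x i * Jmat F : Matrix X X F) y w = if S.r x y = i then 1 else 0 := by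
    intro w
    rw [Matrix.mul_apply]
    simp only [dualIdem, Jmat, Matrix.of_apply, mul_one]
    rw [Finset.sum_eq_single y]
    · simp
    · intro u _ hu; simp [Ne.symm hu]
    · simp
  rw [Matrix.mul_apply]
  simp only [hEJ]
  simp only [dualIdem, Matrix.of_apply]
  rw [Finset.sum_eq_single z]
  · rw [ind_mul]
    exact if_congr (by constructor <;> (rintro ⟨h1, h2⟩; tauto)) rfl rfl
  · intro u _ hu; simp [hu]
  · simp

lemma EJE_mem_B0 (i j : Fin (d + 1)) :
    S.dualIdem F x i * Jmat F * S.dualIdem F x j ∈ B0 F S x :=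
  Submodule.subset_span ⟨(i, j), rfl⟩

lemma EJE_mul_EJE (i j j' l : Fin (d + 1)) :
    (S.dualIdem F x i * Jmat F * S.dualIdem F x j) *
      (S.dualIdem F x j' * Jmat F * S.dualIdem F x l)
      = if j = j' then (S.k j : F) • (S.dualIdem F x i * Jmat F * S.dualIdem F x l)
        else 0 := by
  ext y z
  rw [Matrix.mul_apply]
  simp only [EJE_apply]
  have key : ∀ w : X, (if S.r x y = i ∧ S.r x w = j then (1 : F) else 0) *
      (if S.r x w = j' ∧ S.r x z = l then 1 else 0)
      = if (S.r x y = i ∧ S.r x z = l) ∧ (S.r x w = j ∧ S.r x w = j') then 1 else 0 := by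
    intro w
    rw [ind_mul]
    exact if_congr (by tauto) rfl rfl
  rw [Finset.sum_congr rfl fun w _ => key w]
  by_cases hj : j = j'
  · subst hj
    rw [if_pos rfl, Matrix.smul_apply, EJE_apply, smul_eq_mul]
    by_cases hyz : S.r x y = i ∧ S.r x z = l
    · rw [if_pos hyz, mul_one]
      have h2 : ∀ w : X, (if (S.r x y = i ∧ S.r x z = l) ∧ S.r x w = j ∧ S.r x w = j
          then (1 : F) else 0) = if S.r x w = j then 1 else 0 :=
        fun w => if_congr (by tauto) rfl rfl
      rw [Finset.sum_congr rfl fun w _ => h2 w, Finset.sum_boole, S.card_r x j]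
    · rw [if_neg hyz, mul_zero]
      have h2 : ∀ w : X, (if (S.r x y = i ∧ S.r x z = l) ∧ S.r x w = j ∧ S.r x w = j
          then (1 : F) else 0) = 0 := fun w => if_neg (by tauto)
      rw [Finset.sum_congr rfl fun w _ => h2 w, Finset.sum_const_zero]
  · rw [if_neg hj]
    have h2 : ∀ w : X, (if (S.r x y = i ∧ S.r x z = l) ∧ S.r x w = j ∧ S.r x w = j'
        then (1 : F) else 0) = 0 :=
      fun w => if_neg (by rintro ⟨-, ha, hb⟩; exact hj (ha.symm.trans hb))
    rw [Finset.sum_congr rfl fun w _ => h2 w, Finset.sum_const_zero, Matrix.zero_apply]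

lemma adjM_mul_EJE (m i j : Fin (d + 1)) :
    S.adjM F m * (S.dualIdem F x i * Jmat F * S.dualIdem F x j)
      = ∑ l : Fin (d + 1), (S.p i (S.inv m) l : F) •
          (S.dualIdem F x l * Jmat F * S.dualIdem F x j) := by
  ext y z
  rw [Matrix.mul_apply]
  simp only [EJE_apply, adjM, Matrix.of_apply, Matrix.sum_apply, Matrix.smul_apply,
    smul_eq_mul]
  by_cases hz : S.r x z = j
  · simp only [hz, and_true]
    have key : ∀ w : X, (if S.r y w = m then (1 : F) else 0) * (if S.r x w = i then 1 else 0)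
        = if S.r x w = i ∧ S.r w y = S.inv m then 1 else 0 := by
      intro w
      rw [ind_mul]
      exact if_congr (by rw [S.r_eq_iff y w m]; tauto) rfl rfl
    rw [Finset.sum_congr rfl fun w _ => key w, Finset.sum_boole, S.card_p i (S.inv m) x y]
    rw [Finset.sum_congr rfl (g := fun l => if S.r x y = l then (S.p i (S.inv m) l : F) else 0)
      (fun l _ => by split_ifs <;> simp_all)]
    rw [Finset.sum_ite_eq]
    simp
  · simp only [hz, and_false, if_false, mul_zero, zero_mul, Finset.sum_const_zero]

lemma EJE_mul_adjM (i j m : Fin (d + 1)) :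
    (S.dualIdem F x i * Jmat F * S.dualIdem F x j) * S.adjM F m
      = ∑ l : Fin (d + 1), (S.p j m l : F) •
          (S.dualIdem F x i * Jmat F * S.dualIdem F x l) := by
  ext y z
  rw [Matrix.mul_apply]
  simp only [EJE_apply, adjM, Matrix.of_apply, Matrix.sum_apply, Matrix.smul_apply,
    smul_eq_mul]
  by_cases hy : S.r x y = i
  · simp only [hy, true_and]
    have key : ∀ w : X, (if S.r x w = j then (1 : F) else 0) * (if S.r w z = m then 1 else 0)
        = if S.r x w = j ∧ S.r w z = m then 1 else 0 := fun w => ind_mul F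
    rw [Finset.sum_congr rfl fun w _ => key w, Finset.sum_boole, S.card_p j m x z]
    rw [Finset.sum_congr rfl (g := fun l => if S.r x z = l then (S.p j m l : F) else 0)
      (fun l _ => by split_ifs <;> simp_all)]
    rw [Finset.sum_ite_eq]
    simp
  · simp only [hy, false_and, if_false, zero_mul, mul_zero, Finset.sum_const_zero]

lemma dualIdem_mul_dualIdem (m i : Fin (d + 1)) :
    S.dualIdem F x m * S.dualIdem F x i = if m = i then S.dualIdem F x i else 0 := by
  ext y z
  rw [Matrix.mul_apply]
  simp only [dualIdem, Matrix.of_apply]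
  rw [Finset.sum_eq_single y]
  · rw [ind_mul]
    by_cases hmi : m = i
    · subst hmi
      simp only [if_pos rfl, Matrix.of_apply]
      exact if_congr (by tauto) rfl rfl
    · rw [if_neg (by rintro ⟨⟨_, h1⟩, _, h2⟩; exact hmi (h1 ▸ h2 ▸ rfl)), if_neg hmi]
      rfl
  · intro u _ hu; simp [Ne.symm hu]
  · simp

lemma Jmat_eq_sum : (Jmat F : Matrix X X F) = ∑ m : Fin (d + 1), S.adjM F m := by
  ext y z
  simp only [Jmat, adjM, Matrix.of_apply, Matrix.sum_apply]
  rw [Finset.sum_ite_eq]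
  simp

lemma adjM_mem (m : Fin (d + 1)) : S.adjM F m ∈ S.terw F x :=
  Algebra.subset_adjoin (Or.inl ⟨m, rfl⟩)

lemma dualIdem_mem (i : Fin (d + 1)) : S.dualIdem F x i ∈ S.terw F x :=
  Algebra.subset_adjoin (Or.inr ⟨i, rfl⟩)

lemma Jmat_mem : (Jmat F : Matrix X X F) ∈ S.terw F x := by
  rw [S.Jmat_eq_sum F]
  exact Subalgebra.sum_mem _ fun m _ => S.adjM_mem F x m

lemma EJE_mem_terw (i j : Fin (d + 1)) :
    S.dualIdem F x i * Jmat F * S.dualIdem F x j ∈ S.terw F x :=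
  mul_mem (mul_mem (S.dualIdem_mem F x i) (S.Jmat_mem F x)) (S.dualIdem_mem F x j)

lemma B0_le_terw : B0 F S x ≤ Subalgebra.toSubmodule (S.terw F x) := by
  rw [B0, Submodule.span_le]
  rintro _ ⟨⟨i, j⟩, rfl⟩
  exact S.EJE_mem_terw F x i j

lemma mul_mem_B0 {a : Matrix X X F}
    (ha : ∀ i j : Fin (d + 1),
      a * (S.dualIdem F x i * Jmat F * S.dualIdem F x j) ∈ B0 F S x) :
    ∀ b ∈ B0 F S x, a * b ∈ B0 F S x := by
  intro b hb
  have : B0 F S x ≤ Submodule.comap (LinearMap.mulLeft F a) (B0 F S x) := by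
    rw [B0, Submodule.span_le]
    rintro _ ⟨⟨i, j⟩, rfl⟩
    exact ha i j
  exact this hb

lemma mem_B0_mul {a : Matrix X X F}
    (ha : ∀ i j : Fin (d + 1),
      (S.dualIdem F x i * Jmat F * S.dualIdem F x j) * a ∈ B0 F S x) :
    ∀ b ∈ B0 F S x, b * a ∈ B0 F S x := by
  intro b hb
  have : B0 F S x ≤ Submodule.comap (LinearMap.mulRight F a) (B0 F S x) := by
    rw [B0, Submodule.span_le]
    rintro _ ⟨⟨i, j⟩, rfl⟩
    exact ha i j
  exact this hb

lemma B0_ideal : ∀ a ∈ S.terw F x, ∀ b ∈ B0 F S x,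
    a * b ∈ B0 F S x ∧ b * a ∈ B0 F S x := by
  intro a ha
  induction ha using Algebra.adjoin_induction with
  | mem g hg =>
    rcases hg with ⟨m, rfl⟩ | ⟨i, rfl⟩
    · intro b hb
      constructor
      · refine S.mul_mem_B0 F x (fun i j => ?_) b hb
        rw [S.adjM_mul_EJE F x m i j]
        exact Submodule.sum_mem _ fun l _ =>
          Submodule.smul_mem _ _ (S.EJE_mem_B0 F x l j)
      · refine S.mem_B0_mul F x (fun i j => ?_) b hb
        rw [S.EJE_mul_adjM F x i j m]
        exact Submodule.sum_mem _ fun l _ =>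
          Submodule.smul_mem _ _ (S.EJE_mem_B0 F x i l)
    · intro b hb
      constructor
      · refine S.mul_mem_B0 F x (fun i' j => ?_) b hb
        rw [← mul_assoc, ← mul_assoc, S.dualIdem_mul_dualIdem F x i i']
        split_ifs
        · exact S.EJE_mem_B0 F x i' j
        · simp only [zero_mul]
          exact Submodule.zero_mem _
      · refine S.mem_B0_mul F x (fun i' j => ?_) b hb
        rw [mul_assoc, S.dualIdem_mul_dualIdem F x j i]
        split_ifs
        · exact S.EJE_mem_B0 F x i' i
        · simp only [mul_zero]
          exact Submodule.zero_mem _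
  | algebraMap r =>
    intro b hb
    rw [Algebra.algebraMap_eq_smul_one]
    constructor
    · rw [smul_mul_assoc, one_mul]
      exact Submodule.smul_mem _ _ hb
    · rw [mul_smul_comm, mul_one]
      exact Submodule.smul_mem _ _ hb
  | add a1 a2 h1 h2 ih1 ih2 =>
    intro b hb
    exact ⟨by rw [add_mul]; exact Submodule.add_mem _ (ih1 b hb).1 (ih2 b hb).1,
      by rw [mul_add]; exact Submodule.add_mem _ (ih1 b hb).2 (ih2 b hb).2⟩
  | mul a1 a2 h1 h2 ih1 ih2 =>
    intro b hb
    constructor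
    · rw [mul_assoc]
      exact (ih1 _ (ih2 b hb).1).1
    · rw [← mul_assoc]
      exact (ih2 _ (ih1 b hb).2).2

end Aux

theorem pprime_valenced_iff_complement (p : ℕ) [Fact p.Prime] [CharP F p]
    (S : AssocScheme X d) (x : X) :
    (∀ i : Fin (d + 1), ¬ p ∣ S.k i) ↔
      ∃ D : Submodule F (Matrix X X F),
        D ≤ Subalgebra.toSubmodule (S.terw F x) ∧
        (∀ Z ∈ S.terw F x, ∀ b ∈ D, Z * b ∈ D ∧ b * Z ∈ D) ∧
        B0 F S x ⊓ D = ⊥ ∧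
        B0 F S x ⊔ D = Subalgebra.toSubmodule (S.terw F x) := by
  constructor
  · -- forward: p'-valenced gives a complement
    intro hk
    have hknz : ∀ i : Fin (d + 1), (S.k i : F) ≠ 0 := by
      intro i hi
      exact hk i ((CharP.cast_eq_zero_iff F p _).mp hi)
    set E : Fin (d + 1) → Matrix X X F := fun i =>
      S.dualIdem F x i * Jmat F * S.dualIdem F x i with hE
    set e : Matrix X X F := ∑ i : Fin (d + 1), (S.k i : F)⁻¹ • E i with he
    have heB0 : e ∈ B0 F S x :=
      Submodule.sum_mem _ fun i _ => Submodule.smul_mem _ _ (S.EJE_mem_B0 F x i i)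
    have heT : e ∈ S.terw F x := S.B0_le_terw F x heB0
    -- e is a left identity on generators
    have he_mul_gen : ∀ i j : Fin (d + 1),
        e * (S.dualIdem F x i * Jmat F * S.dualIdem F x j)
          = S.dualIdem F x i * Jmat F * S.dualIdem F x j := by
      intro i j
      rw [he, Finset.sum_mul]
      rw [Finset.sum_eq_single i]
      · rw [smul_mul_assoc, hE, S.EJE_mul_EJE F x i i i j, if_pos rfl, smul_smul,
          inv_mul_cancel₀ (hknz i), one_smul]
      · intro m _ hm
        rw [smul_mul_assoc, hE, S.EJE_mul_EJE F x m m i j, if_neg hm, smul_zero]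
      · simp
    have hgen_mul_e : ∀ i j : Fin (d + 1),
        (S.dualIdem F x i * Jmat F * S.dualIdem F x j) * e
          = S.dualIdem F x i * Jmat F * S.dualIdem F x j := by
      intro i j
      rw [he, Finset.mul_sum]
      rw [Finset.sum_eq_single j]
      · rw [mul_smul_comm, hE, S.EJE_mul_EJE F x i j j j, if_pos rfl, smul_smul,
          inv_mul_cancel₀ (hknz j), one_smul]
      · intro m _ hm
        rw [mul_smul_comm, hE, S.EJE_mul_EJE F x i j m m, if_neg (Ne.symm hm), smul_zero]
      · simp
    have he_left : ∀ b ∈ B0 F S x, e * b = b := by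
      intro b hb
      induction hb using Submodule.span_induction with
      | mem g hg => obtain ⟨⟨i, j⟩, rfl⟩ := hg; exact he_mul_gen i j
      | zero => rw [mul_zero]
      | add b1 b2 h1 h2 ih1 ih2 => rw [mul_add, ih1, ih2]
      | smul c b hbmem ih => rw [mul_smul_comm, ih]
    have he_right : ∀ b ∈ B0 F S x, b * e = b := by
      intro b hb
      induction hb using Submodule.span_induction with
      | mem g hg => obtain ⟨⟨i, j⟩, rfl⟩ := hg; exact hgen_mul_e i j
      | zero => rw [zero_mul]
      | add b1 b2 h1 h2 ih1 ih2 => rw [add_mul, ih1, ih2]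
      | smul c b hbmem ih => rw [smul_mul_assoc, ih]
    have he_central : ∀ Z ∈ S.terw F x, e * Z = Z * e := by
      intro Z hZ
      have h1 : e * Z ∈ B0 F S x := (S.B0_ideal F x Z hZ e heB0).2
      have h2 : Z * e ∈ B0 F S x := (S.B0_ideal F x Z hZ e heB0).1
      calc e * Z = (e * Z) * e := (he_right _ h1).symm
        _ = e * (Z * e) := by rw [mul_assoc]
        _ = Z * e := he_left _ h2
    -- the complement
    refine ⟨Submodule.map (LinearMap.id - LinearMap.mulLeft F e)
      (Subalgebra.toSubmodule (S.terw F x)), ?_, ?_, ?_, ?_⟩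
    · rintro _ ⟨t, ht, rfl⟩
      have ht' : t ∈ S.terw F x := ht
      simp only [LinearMap.sub_apply, LinearMap.id_apply, LinearMap.mulLeft_apply]
      exact (Subalgebra.mem_toSubmodule _).mpr (sub_mem ht' (mul_mem heT ht'))
    · rintro Z hZ _ ⟨t, ht, rfl⟩
      have ht' : t ∈ S.terw F x := ht
      constructor
      · refine ⟨Z * t, (Subalgebra.mem_toSubmodule _).mpr (mul_mem hZ ht'), ?_⟩
        simp only [LinearMap.sub_apply, LinearMap.id_apply, LinearMap.mulLeft_apply]
        rw [mul_sub, ← mul_assoc, ← mul_assoc, he_central Z hZ]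
      · refine ⟨t * Z, (Subalgebra.mem_toSubmodule _).mpr (mul_mem ht' hZ), ?_⟩
        simp only [LinearMap.sub_apply, LinearMap.id_apply, LinearMap.mulLeft_apply]
        rw [sub_mul, mul_assoc]
    · rw [eq_bot_iff]
      rintro b ⟨hbB0, t, ht, hbt⟩
      simp only [LinearMap.sub_apply, LinearMap.id_apply, LinearMap.mulLeft_apply] at hbt
      have h1 : e * b = b := he_left b hbB0
      have h2 : e * b = 0 := by
        rw [← hbt, mul_sub, ← mul_assoc,
          he_right e heB0]
        exact sub_self _
      rw [Submodule.mem_bot, ← h1, h2]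
    · apply le_antisymm
      · exact sup_le (S.B0_le_terw F x) (by
          rintro _ ⟨t, ht, rfl⟩
          have ht' : t ∈ S.terw F x := ht
          simp only [LinearMap.sub_apply, LinearMap.id_apply, LinearMap.mulLeft_apply]
          exact (Subalgebra.mem_toSubmodule _).mpr (sub_mem ht' (mul_mem heT ht')))
      · intro t ht
        rw [Submodule.mem_sup]
        refine ⟨e * t, (S.B0_ideal F x t ht e heB0).2, t - e * t, ⟨t, ht, ?_⟩, by abel⟩
        simp only [LinearMap.sub_apply, LinearMap.id_apply, LinearMap.mulLeft_apply]
  · -- converse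
    rintro ⟨D, hDle, hDideal, hinf, hsup⟩ i hdvd
    have hki : (S.k i : F) = 0 := (CharP.cast_eq_zero_iff F p _).mpr hdvd
    have h1 : (1 : Matrix X X F) ∈ B0 F S x ⊔ D := by
      rw [hsup]
      exact (Subalgebra.mem_toSubmodule _).mpr (one_mem (S.terw F x))
    obtain ⟨b, hb, dd, hd, hbd⟩ := Submodule.mem_sup.mp h1
    set z : Matrix X X F := S.dualIdem F x i * Jmat F * S.dualIdem F x i with hz
    have hzb' : ∀ b' ∈ B0 F S x, z * b' = 0 := by
      intro b' hb'
      induction hb' using Submodule.span_induction with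
      | mem g hg =>
        obtain ⟨⟨j, l⟩, rfl⟩ := hg
        rw [hz, S.EJE_mul_EJE F x i i j l]
        split_ifs with h
        · rw [hki, zero_smul]
        · rfl
      | zero => rw [mul_zero]
      | add b1 b2 h1 h2 ih1 ih2 => rw [mul_add, ih1, ih2, add_zero]
      | smul c b hbmem ih => rw [mul_smul_comm, ih, smul_zero]
    have hzb : z * b = 0 := hzb' b hb
    have hzd : z * dd ∈ D :=
      (hDideal z (S.EJE_mem_terw F x i i) dd hd).1
    have hzeq : z = z * dd := by
      have : z * (b + dd) = z := by rw [hbd, mul_one]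
      rw [mul_add, hzb, zero_add] at this
      exact this.symm
    have hzB0 : z ∈ B0 F S x := S.EJE_mem_B0 F x i i
    have hz0 : z = 0 := by
      have : z ∈ B0 F S x ⊓ D := ⟨hzB0, hzeq ▸ hzd⟩
      rw [hinf] at this
      exact (Submodule.mem_bot F).mp this
    obtain ⟨y, hy⟩ := S.exists_r x i
    have : z y y = 1 := by
      rw [hz, EJE_apply, if_pos ⟨hy, hy⟩]
    rw [hz0] at this
    simp at this

end AssocScheme
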